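/- arXiv:2502.11950 — 6 statements merged into one kernel-verified Lean document; each statement's English description precedes it below -/
import Mathlib

section
/- Let N, h be natural numbers and let R ∈ Matrix (Fin N) (Fin (2*N)) ℚ and C ∈ Matrix (Fin (2*h)) (Fin (2*N)) ℚ be rational matrices satisfying: (a) C * J_{2N} * Cᵀ = 2 • J_{2h} and R * J_{2N} * Cᵀ = 0; (b) for every x : Fin (2*N) → ℂ with (R_ℂ).mulVec x = 0 there exist z : Fin (2*h) → ℂ and w : Fin N → ℂ such that Matrix.vecMul x (J_{2N})_ℂ = Matrix.vecMul z C_ℂ + Matrix.vecMul w R_ℂ. Suppose Z : Fin (2*N) → ℂ and rational vectors d₁ : Fin N → ℚ, d₂ : Fin (2*h) → ℚ satisfy (R_ℂ).mulVec Z = (π * Complex.I) • d₁_ℂ and (C_ℂ).mulVec Z = (π * Complex.I) • d₂_ℂ (where d_ℂ is the vector of d's entries mapped into ℂ). Let V be the quotient ℚ-vector space ℂ ⧸ (ℚ ∙ (2*π*Complex.I)) and let q : ℂ → V be the quotient map. Then Σ_{i : Fin N} q(Z i) ∧ q(Z (N + i)) = 0 in the exterior square Λ²_ℚ V. -/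
/-!
Write `x i` for the class of `Z i` in `V`. A rational vector `u` in the row space `U` of
the stacked matrix `[R; C]` pairs with `Z` into `πi ℚ = 2πi ℚ`, so `∑ u i • x i = 0` in `V`.
Condition (b) descends from `ℂ` to `ℚ`, because a rational vector in the complex row span of a
rational matrix already lies in its rational row span (kernel and row space are orthogonal
complements over an ordered field); it then says `J (ker R) ⊆ U`. If `P` is the orthogonal
projection onto `ker R`, the matrix `A = ½ (J P + (1 - P) J)` satisfies `A - Aᵀ = J` and has all
its columns in `U`. Hence `∑ J i j • x i ∧ x j = ∑ (A i j - A j i) • x i ∧ x j = 0`, each column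
of `A` annihilating the `x i`, while the left-hand side is twice the sum in question.
-/

open Matrix

/-- The `2n × 2n` rational matrix with block form `[[0, Iₙ], [−Iₙ, 0]]`. -/
def Jmat (n : ℕ) : Matrix (Fin (2 * n)) (Fin (2 * n)) ℚ :=
  Matrix.of fun i j =>
    if i.1 < n ∧ j.1 = i.1 + n then 1
    else if j.1 < n ∧ i.1 = j.1 + n then -1 else 0

/-- The wedge product `u ∧ w` of two elements of a `ℚ`-vector space `V`,
as an element of the second exterior power `⋀[ℚ]^2 V`. -/
noncomputable def wedge {V : Type*} [AddCommGroup V] [Module ℚ V] (u w : V) :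
    ⋀[ℚ]^2 V :=
  ⟨ExteriorAlgebra.ιMulti ℚ 2 ![u, w],
    ExteriorAlgebra.ιMulti_range ℚ 2 ⟨![u, w], rfl⟩⟩

namespace Matrix

variable {K : Type*} {m n : Type*} [Fintype m]

theorem range_vecMulLinear_le_fromRows {p : Type*} [Fintype p] [Semiring K] (A : Matrix m n K)
    (B : Matrix p n K) :
    LinearMap.range A.vecMulLinear ≤ LinearMap.range (fromRows A B).vecMulLinear := by
  rintro _ ⟨c, rfl⟩
  exact ⟨Sum.elim c 0, by simp⟩

variable [Fintype n]

theorem dotProduct_eq_zero_of_mulVec_eq_zero [CommSemiring K] (A : Matrix m n K) {x y : n → K}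
    (hx : A *ᵥ x = 0) (hy : y ∈ LinearMap.range A.vecMulLinear) : y ⬝ᵥ x = 0 := by
  obtain ⟨c, rfl⟩ := hy
  rw [vecMulLinear_apply, ← dotProduct_mulVec, hx, dotProduct_zero]

theorem sum_smul_mem_of_mulVec_map_mem {L : Type*} [CommSemiring K] [CommSemiring L]
    [Algebra K L] (M : Matrix m n K) (Z : n → L) (S : Submodule K L)
    (hMZ : ∀ k, (M.map (algebraMap K L) *ᵥ Z) k ∈ S)
    {u : n → K} (hu : u ∈ LinearMap.range M.vecMulLinear) : ∑ i, u i • Z i ∈ S := by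
  obtain ⟨c, rfl⟩ := hu
  have : ∑ i, (c ᵥ* M) i • Z i = ∑ k, c k • (M.map (algebraMap K L) *ᵥ Z) k := by
    simp only [vecMul, mulVec, dotProduct, map_apply, Algebra.smul_def, map_sum, map_mul,
      Finset.sum_mul, Finset.mul_sum, mul_assoc]
    exact Finset.sum_comm
  rw [vecMulLinear_apply, this]
  exact Submodule.sum_smul_mem _ _ fun k _ => hMZ k

variable [Field K] [LinearOrder K] [IsStrictOrderedRing K]

theorem isCompl_ker_mulVecLin_range_vecMulLinear (A : Matrix m n K) :
    IsCompl (LinearMap.ker A.mulVecLin) (LinearMap.range A.vecMulLinear) := by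
  have hdisj : Disjoint (LinearMap.ker A.mulVecLin) (LinearMap.range A.vecMulLinear) :=
    Submodule.disjoint_def.2 fun x hx hx' =>
      dotProduct_self_eq_zero.1 (dotProduct_eq_zero_of_mulVec_eq_zero A hx hx')
  refine ⟨hdisj, codisjoint_iff.2 (Submodule.eq_top_of_finrank_eq ?_)⟩
  have hrank : Module.finrank K (LinearMap.range A.vecMulLinear) =
      Module.finrank K (LinearMap.range A.mulVecLin) := by
    have := rank_transpose A
    rwa [Matrix.rank, Matrix.rank, mulVecLin_transpose] at this
  have hsup := Submodule.finrank_sup_add_finrank_inf_eq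
    (LinearMap.ker A.mulVecLin) (LinearMap.range A.vecMulLinear)
  rw [disjoint_iff.1 hdisj, finrank_bot, add_zero, hrank, add_comm] at hsup
  rw [hsup, LinearMap.finrank_range_add_finrank_ker]

theorem mem_range_vecMulLinear_of_map {L : Type*} [CommRing L] [Nontrivial L] [Algebra K L]
    (A : Matrix m n K) {u : n → K}
    (hu : algebraMap K L ∘ u ∈ LinearMap.range (A.map (algebraMap K L)).vecMulLinear) :
    u ∈ LinearMap.range A.vecMulLinear := by
  obtain ⟨a, ha, b, hb, rfl⟩ := Submodule.mem_sup.1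
    ((isCompl_ker_mulVecLin_range_vecMulLinear A).sup_eq_top ▸ Submodule.mem_top (x := u))
  suffices a = 0 by rwa [this, zero_add]
  have ha' : A *ᵥ a = 0 := ha
  have hua : (a + b) ⬝ᵥ a = 0 := by
    obtain ⟨c, hc⟩ := hu
    apply (algebraMap K L).injective
    rw [RingHom.map_dotProduct, ← hc, vecMulLinear_apply, ← dotProduct_mulVec, map_zero]
    have : A.map (algebraMap K L) *ᵥ (algebraMap K L ∘ a) = 0 := by
      funext i
      rw [← RingHom.map_mulVec, ha', Pi.zero_apply, map_zero, Pi.zero_apply]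
    rw [this, dotProduct_zero]
  rwa [add_dotProduct, dotProduct_eq_zero_of_mulVec_eq_zero A ha' hb, add_zero,
    dotProduct_self_eq_zero] at hua

theorem exists_orthogonalProjection_ker [DecidableEq n] (A : Matrix m n K) :
    ∃ P : Matrix n n K, Pᵀ = P ∧
      ∀ v, A *ᵥ (P *ᵥ v) = 0 ∧ v - P *ᵥ v ∈ LinearMap.range A.vecMulLinear := by
  have hc := isCompl_ker_mulVecLin_range_vecMulLinear A
  set P := LinearMap.toMatrix' ((LinearMap.ker A.mulVecLin).projection _ hc)
  have hP v : A *ᵥ (P *ᵥ v) = 0 ∧ v - P *ᵥ v ∈ LinearMap.range A.vecMulLinear := by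
    simp only [P, LinearMap.toMatrix'_mulVec]
    exact ⟨Submodule.projection_apply_mem hc v, Submodule.sub_projection_mem hc v⟩
  -- the right-hand side is symmetric in `u` and `w`, which forces `Pᵀ = P`
  have hdot u w : u ⬝ᵥ P *ᵥ w = P *ᵥ u ⬝ᵥ P *ᵥ w := by
    have := dotProduct_eq_zero_of_mulVec_eq_zero A (hP w).1 (hP u).2
    rwa [sub_dotProduct, sub_eq_zero] at this
  refine ⟨P, ?_, hP⟩
  ext i j
  have := hdot (Pi.single j 1) (Pi.single i 1)
  rwa [dotProduct_comm (P *ᵥ _), ← hdot, mulVec_single_one, mulVec_single_one,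
    single_dotProduct, single_dotProduct, one_mul, one_mul] at this

theorem exists_sub_transpose_eq_of_mulVec_mem [DecidableEq n] (R : Matrix m n K)
    (J : Matrix n n K) (hJ : Jᵀ = -J) (U : Submodule K (n → K))
    (hRU : LinearMap.range R.vecMulLinear ≤ U) (hJU : ∀ v, R *ᵥ v = 0 → J *ᵥ v ∈ U) :
    ∃ A : Matrix n n K, A - Aᵀ = J ∧ ∀ j, A.col j ∈ U := by
  obtain ⟨P, hPt, hP⟩ := exists_orthogonalProjection_ker R
  refine ⟨(2⁻¹ : K) • (J * P + (1 - P) * J), ?_, fun j => ?_⟩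
  · rw [transpose_smul, transpose_add, transpose_mul, transpose_mul, transpose_sub,
      transpose_one, hPt, hJ, ← smul_sub,
      show J * P + (1 - P) * J - (P * -J + -J * (1 - P)) = (2 : K) • J by
        rw [two_smul]; noncomm_ring, smul_smul, inv_mul_cancel₀ two_ne_zero, one_smul]
  · rw [← mulVec_single_one, smul_mulVec, add_mulVec, ← mulVec_mulVec, ← mulVec_mulVec,
      sub_mulVec, one_mulVec]
    exact U.smul_mem _ (U.add_mem (hJU _ (hP _).1) (hRU (hP _).2))

end Matrix

namespace ExteriorAlgebra

variable {R M : Type*} [CommRing R] [AddCommGroup M] [Module R M]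

theorem ι_mul_ι_sub_ι_mul_ι_eq_two_smul (u w : M) :
    ι R u * ι R w - ι R w * ι R u = (2 : R) • (ι R u * ι R w) := by
  rw [eq_neg_of_add_eq_zero_right (ι_add_mul_swap u w), sub_neg_eq_add, two_smul]

theorem sum_sub_transpose_smul_ι_mul_ι_eq_zero {n : Type*} [Fintype n] (x : n → M)
    (A : Matrix n n R) (hA : ∀ j, ∑ i, A i j • x i = 0) :
    ∑ i, ∑ j, (A - Aᵀ) i j • (ι R (x i) * ι R (x j)) = 0 := by
  have hcols : ∑ i, ∑ j, A i j • (ι R (x i) * ι R (x j)) = 0 := by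
    rw [Finset.sum_comm]
    refine Finset.sum_eq_zero fun j _ => ?_
    simp only [← smul_mul_assoc, ← Finset.sum_mul, ← map_smul, ← map_sum, hA, map_zero,
      zero_mul]
  have hrows : ∑ i, ∑ j, A j i • (ι R (x i) * ι R (x j)) = 0 := by
    refine Finset.sum_eq_zero fun i _ => ?_
    simp only [← mul_smul_comm, ← Finset.mul_sum, ← map_smul, ← map_sum, hA, map_zero,
      mul_zero]
  simp only [Matrix.sub_apply, transpose_apply, sub_smul, Finset.sum_sub_distrib, hcols, hrows,
    sub_zero]

end ExteriorAlgebra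

theorem Jmat_transpose (n : ℕ) : (Jmat n)ᵀ = -Jmat n := by
  ext i j
  simp only [Jmat, transpose_apply, Matrix.neg_apply, of_apply]
  split_ifs <;> first | (exfalso; omega) | norm_num

theorem Jmat_row_top {n : ℕ} (i : Fin n) :
    Jmat n ⟨i, by omega⟩ = Pi.single ⟨n + i, by omega⟩ 1 := by
  ext j
  simp only [Jmat, of_apply, Pi.single_apply, Fin.ext_iff]
  have := i.isLt
  split_ifs <;> first | rfl | (exfalso; omega)

theorem Jmat_row_bottom {n : ℕ} (i : Fin n) :
    Jmat n ⟨n + i, by omega⟩ = Pi.single ⟨i, by omega⟩ (-1) := by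
  ext j
  simp only [Jmat, of_apply, Pi.single_apply, Fin.ext_iff]
  have := i.isLt
  split_ifs <;> first | rfl | (exfalso; omega)

theorem sum_Jmat_smul {α : Type*} [AddCommGroup α] [Module ℚ α] (n : ℕ)
    (f : Fin (2 * n) → Fin (2 * n) → α) :
    ∑ i, ∑ j, Jmat n i j • f i j =
      ∑ i : Fin n,
        (f ⟨i, by omega⟩ ⟨n + i, by omega⟩ - f ⟨n + i, by omega⟩ ⟨i, by omega⟩) := by
  rw [← (finCongr (two_mul n).symm).sum_comp, Fin.sum_univ_add, ← Finset.sum_add_distrib]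
  refine Finset.sum_congr rfl fun i _ => ?_
  have hl : finCongr (two_mul n).symm (Fin.castAdd n i) = ⟨i, by omega⟩ := rfl
  have hr : finCongr (two_mul n).symm (Fin.natAdd n i) = ⟨n + i, by omega⟩ := rfl
  rw [hl, hr, Jmat_row_top, Jmat_row_bottom, sub_eq_add_neg]
  simp [Pi.single_apply, ite_smul]

theorem coe_wedge {V : Type*} [AddCommGroup V] [Module ℚ V] (u w : V) :
    (wedge u w : ExteriorAlgebra ℚ V) = ExteriorAlgebra.ι ℚ u * ExteriorAlgebra.ι ℚ w := by
  simp [wedge, ExteriorAlgebra.ιMulti_apply]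

theorem Jmat_mulVec_mem_range_fromRows {L p : Type*} [CommRing L] [Nontrivial L]
    [Algebra ℚ L] [Fintype p] {N : ℕ} (R : Matrix (Fin N) (Fin (2 * N)) ℚ)
    (C : Matrix p (Fin (2 * N)) ℚ)
    (hb : ∀ x : Fin (2 * N) → L, (R.map (algebraMap ℚ L)).mulVec x = 0 →
      ∃ (z : p → L) (w : Fin N → L),
        Matrix.vecMul x ((Jmat N).map (algebraMap ℚ L)) =
          Matrix.vecMul z (C.map (algebraMap ℚ L)) +
            Matrix.vecMul w (R.map (algebraMap ℚ L)))
    {v : Fin (2 * N) → ℚ} (hv : R *ᵥ v = 0) :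
    Jmat N *ᵥ v ∈ LinearMap.range (fromRows R C).vecMulLinear := by
  obtain ⟨z, w, hzw⟩ := hb (algebraMap ℚ L ∘ v) <| by
    funext i
    rw [← RingHom.map_mulVec, hv, Pi.zero_apply, map_zero, Pi.zero_apply]
  have hvJ : v ᵥ* Jmat N ∈ LinearMap.range (fromRows R C).vecMulLinear := by
    refine mem_range_vecMulLinear_of_map _ ⟨Sum.elim w z, ?_⟩
    funext i
    rw [fromRows_map, vecMulLinear_apply, sumElim_vecMul_fromRows, add_comm, ← hzw,
      Function.comp_apply, RingHom.map_vecMul]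
  rw [← vecMul_transpose, Jmat_transpose, vecMul_neg]
  exact Submodule.neg_mem _ hvJ

theorem complex_Dehn_invariant_vanishes (N h : ℕ)
    (R : Matrix (Fin N) (Fin (2 * N)) ℚ) (C : Matrix (Fin (2 * h)) (Fin (2 * N)) ℚ)
    (hb : ∀ x : Fin (2 * N) → ℂ, (R.map (algebraMap ℚ ℂ)).mulVec x = 0 →
      ∃ (z : Fin (2 * h) → ℂ) (w : Fin N → ℂ),
        Matrix.vecMul x ((Jmat N).map (algebraMap ℚ ℂ)) =
          Matrix.vecMul z (C.map (algebraMap ℚ ℂ)) +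
            Matrix.vecMul w (R.map (algebraMap ℚ ℂ)))
    (Z : Fin (2 * N) → ℂ) (d₁ : Fin N → ℚ) (d₂ : Fin (2 * h) → ℚ)
    (hZ1 : (R.map (algebraMap ℚ ℂ)).mulVec Z =
      ((Real.pi : ℂ) * Complex.I) • fun i => algebraMap ℚ ℂ (d₁ i))
    (hZ2 : (C.map (algebraMap ℚ ℂ)).mulVec Z =
      ((Real.pi : ℂ) * Complex.I) • fun i => algebraMap ℚ ℂ (d₂ i)) :
    ∑ i : Fin N,
      wedge
        ((ℚ ∙ (2 * (Real.pi : ℂ) * Complex.I)).mkQ (Z ⟨i.1, by have := i.isLt; omega⟩))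
        ((ℚ ∙ (2 * (Real.pi : ℂ) * Complex.I)).mkQ (Z ⟨N + i.1, by have := i.isLt; omega⟩)) =
      0 := by
  set S := ℚ ∙ (2 * (Real.pi : ℂ) * Complex.I)
  set U := LinearMap.range (fromRows R C).vecMulLinear
  have hπI (d : ℚ) : (Real.pi : ℂ) * Complex.I * algebraMap ℚ ℂ d ∈ S :=
    Submodule.mem_span_singleton.2 ⟨d / 2, by
      rw [Rat.smul_def, eq_ratCast]; push_cast; ring⟩
  have hMZ : ∀ k, ((fromRows R C).map (algebraMap ℚ ℂ) *ᵥ Z) k ∈ S := by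
    rintro (k | k)
    · simpa [fromRows_map, hZ1] using hπI (d₁ k)
    · simpa [fromRows_map, hZ2] using hπI (d₂ k)
  have hZU : ∀ u ∈ U, ∑ i, u i • S.mkQ (Z i) = 0 := by
    intro u hu
    have := sum_smul_mem_of_mulVec_map_mem _ Z S hMZ hu
    rw [← Submodule.ker_mkQ S, LinearMap.mem_ker, map_sum] at this
    simpa only [map_smul] using this
  obtain ⟨A, hAJ, hAU⟩ := exists_sub_transpose_eq_of_mulVec_mem R (Jmat N) (Jmat_transpose N) U
    (range_vecMulLinear_le_fromRows R C) fun _ hv => Jmat_mulVec_mem_range_fromRows R C hb hv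
  have key := ExteriorAlgebra.sum_sub_transpose_smul_ι_mul_ι_eq_zero (fun i => S.mkQ (Z i)) A
    fun j => hZU _ (hAU j)
  rw [hAJ, sum_Jmat_smul] at key
  simp only [ExteriorAlgebra.ι_mul_ι_sub_ι_mul_ι_eq_two_smul, ← Finset.smul_sum, smul_eq_zero,
    two_ne_zero, false_or] at key
  apply Subtype.ext
  simpa [coe_wedge] using key
end

section
/- Let V be a finite-dimensional ℂ-vector space, let W : ℤ → Submodule ℂ V be monotone (increasing) with W n = ⊥ for all sufficiently small n and W n = ⊤ for all sufficiently large n, and let F : ℤ → Submodule ℂ V be antitone (decreasing) with F n = ⊤ for all sufficiently small n and F n = ⊥ for all sufficiently large n. Then the following are equivalent: (1) for every p ∈ ℤ the composite of the inclusion F p ⊓ W p → W p with the quotient map W p → W p ⧸ W (p−1) is a linear isomorphism; (2) for every p ∈ ℤ the composite of the inclusion F p ⊓ W p → F p with the quotient map F p → F p ⧸ F (p+1) is a linear isomorphism; (3) the family of submodules (F p ⊓ W p)_{p ∈ ℤ} is independent and its supremum is ⊤ (i.e. V is the internal direct sum of the subspaces F p ⊓ W p); (4) there exists a family (V_p)_{p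 ∈ ℤ} of submodules of V such that V is the internal direct sum of the V_p and for every k ∈ ℤ, W k = ⨆_{p ≤ k} V_p and F k = ⨆_{p ≥ k} V_p. Moreover, when these conditions hold, in (4) one necessarily has V_p = F p ⊓ W p for every p. -/
section

variable {V : Type*} [AddCommGroup V] [Module ℂ V] (W F : ℤ → Submodule ℂ V)

/-- Condition (1): for every `p`, the composite of the inclusion `F p ⊓ W p → W p`
with the quotient map `W p → W p ⧸ W (p − 1)` is a linear isomorphism. -/
def Cond1 : Prop :=
  ∀ p : ℤ, Function.Bijective
    (((W (p - 1)).comap (W p).subtype).mkQ.comp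
      (Submodule.inclusion (inf_le_right : F p ⊓ W p ≤ W p)))

/-- Condition (2): for every `p`, the composite of the inclusion `F p ⊓ W p → F p`
with the quotient map `F p → F p ⧸ F (p + 1)` is a linear isomorphism. -/
def Cond2 : Prop :=
  ∀ p : ℤ, Function.Bijective
    (((F (p + 1)).comap (F p).subtype).mkQ.comp
      (Submodule.inclusion (inf_le_left : F p ⊓ W p ≤ F p)))

/-- Condition (3): `V` is the internal direct sum of the subspaces `F p ⊓ W p`. -/
def Cond3 : Prop :=
  iSupIndep (fun p : ℤ => F p ⊓ W p) ∧
    (⨆ p : ℤ, F p ⊓ W p) = ⊤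

/-- Condition (4): there is a grading `(V_p)` of `V` splitting both filtrations. -/
def Cond4 : Prop :=
  ∃ Vp : ℤ → Submodule ℂ V,
    iSupIndep Vp ∧ (⨆ p : ℤ, Vp p) = ⊤ ∧
      (∀ k : ℤ, W k = ⨆ p ≤ k, Vp p) ∧ (∀ k : ℤ, F k = ⨆ p ≥ k, Vp p)

end

/-!
Write `G p = F p ⊓ W p`. Condition (1) unpacks as `F p ⊓ W (p - 1) = ⊥` together with
`W p ≤ G p ⊔ W (p - 1)`, and condition (2) as `F (p + 1) ⊓ W p = ⊥` together with
`F p ≤ G p ⊔ F (p + 1)`; the two disjointness conditions agree up to a shift of `p`.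
Disjointness alone makes the `G p` independent, because every other `G q` lies in
`F (p + 1) ⊔ W (p - 1)`, and either covering condition gives `⨆ G = ⊤` by induction along the
bounded filtration. Conversely, once the `G p` span, the modular law splits `F k` off `W (k - 1)`
and `W k` off `F (k + 1)`, which is the grading (4). A grading `Vp` as in (4) has `Vp p ≤ G p` and
`G p ≤ Vp p ⊔ (F p ⊓ W (p - 1)) = Vp p`.
-/

open Submodule

section Lattice

variable {α : Type*}

theorem disjoint_inf_left_iff_of_le [SemilatticeInf α] [OrderBot α] {a b c : α}
    (h : c ≤ b) : Disjoint (a ⊓ b) c ↔ Disjoint a c := by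
  rw [disjoint_iff, disjoint_iff, inf_assoc, inf_eq_right.2 h]

theorem eq_of_le_sup_of_disjoint [Lattice α] [OrderBot α] [IsModularLattice α] {a b c : α}
    (hba : b ≤ a) (h : a ≤ b ⊔ c) (hac : Disjoint a c) : a = b :=
  le_antisymm
    (calc a = (b ⊔ c) ⊓ a := (inf_eq_right.2 h).symm
      _ = b ⊔ c ⊓ a := sup_inf_assoc_of_le c hba
      _ = b := by rw [hac.symm.eq_bot, sup_bot_eq]).le
    hba

theorem disjoint_inf_sup_of_disjoint [Lattice α] [OrderBot α] [IsModularLattice α]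
    {a b a' b' : α} (ha' : a' ≤ a) (h₁ : Disjoint a b') (h₂ : Disjoint a' b) :
    Disjoint (a ⊓ b) (a' ⊔ b') :=
  (h₂.symm.mono_left inf_le_right).disjoint_sup_right_of_disjoint_sup_left
    (h₁.mono_left (sup_le inf_le_left ha'))

variable [CompleteLattice α] {W F : ℤ → α}

theorem disjoint_of_iSupIndep_inf (hW : Monotone W) (hF : Antitone F)
    (h : iSupIndep fun p => F p ⊓ W p) (p : ℤ) : Disjoint (F p) (W (p - 1)) :=
  disjoint_iff_inf_le.2 <|
    (le_inf (inf_le_inf_left _ (hW (by omega))) (inf_le_inf_right _ (hF (by omega)))).trans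
      (disjoint_iff_inf_le.1 (h.pairwiseDisjoint (show p ≠ p - 1 by omega)))

theorem iSupIndep_inf_of_disjoint [IsModularLattice α] (hW : Monotone W) (hF : Antitone F)
    (hdisj : ∀ p, Disjoint (F p) (W (p - 1))) : iSupIndep fun p => F p ⊓ W p := by
  intro p
  refine (disjoint_inf_sup_of_disjoint (hF (Int.le_add_one le_rfl)) (hdisj p)
    (by simpa using hdisj (p + 1))).mono_right (iSup₂_le fun q hq => ?_)
  rcases hq.lt_or_gt with hlt | hgt
  · exact le_sup_of_le_right (inf_le_right.trans (hW (by omega)))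
  · exact le_sup_of_le_left (inf_le_left.trans (hF (by omega)))

theorem iSup_eq_top_of_le_sup_pred {G : ℤ → α} {a b : ℤ} (hab : a ≤ b) (ha : W a = ⊥)
    (hb : W b = ⊤) (hcov : ∀ p, W p ≤ G p ⊔ W (p - 1)) : ⨆ p, G p = ⊤ := by
  have key : ∀ n, a ≤ n → W n ≤ ⨆ p, G p := by
    intro n hn
    induction n, hn using Int.leInduction with
    | base => simp [ha]
    | succ n _ ih => exact (hcov (n + 1)).trans (sup_le (le_iSup G _) (by simpa using ih))
  exact top_unique (hb ▸ key b hab)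

theorem iSup_eq_top_of_le_sup_succ {G : ℤ → α} {a b : ℤ} (hab : a ≤ b) (ha : F a = ⊤)
    (hb : F b = ⊥) (hcov : ∀ p, F p ≤ G p ⊔ F (p + 1)) : ⨆ p, G p = ⊤ := by
  have key : ∀ n, n ≤ b → F n ≤ ⨆ p, G p := by
    intro n hn
    induction n, hn using Int.leInductionDown with
    | base => simp [hb]
    | pred n _ ih => exact (hcov (n - 1)).trans (sup_le (le_iSup G _) (by simpa using ih))
  exact top_unique (ha ▸ key a hab)

theorem eq_biSup_inf_of_disjoint_succ [IsModularLattice α] (hW : Monotone W) (hF : Antitone F)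
    (htop : ⨆ p, F p ⊓ W p = ⊤) {k : ℤ} (hdisj : Disjoint (W k) (F (k + 1))) :
    W k = ⨆ p ≤ k, F p ⊓ W p := by
  refine eq_of_le_sup_of_disjoint (iSup₂_le fun p hp => inf_le_right.trans (hW hp)) ?_ hdisj
  calc W k ≤ ⨆ p, F p ⊓ W p := htop ▸ le_top
    _ = _ := iSup_split _ (· ≤ k)
    _ ≤ _ := sup_le_sup_left (iSup₂_le fun p hp => inf_le_left.trans (hF (by omega))) _

theorem eq_biSup_inf_of_disjoint_pred [IsModularLattice α] (hW : Monotone W) (hF : Antitone F)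
    (htop : ⨆ p, F p ⊓ W p = ⊤) {k : ℤ} (hdisj : Disjoint (F k) (W (k - 1))) :
    F k = ⨆ p ≥ k, F p ⊓ W p := by
  refine eq_of_le_sup_of_disjoint (iSup₂_le fun p hp => inf_le_left.trans (hF hp)) ?_ hdisj
  calc F k ≤ ⨆ p, F p ⊓ W p := htop ▸ le_top
    _ = _ := iSup_split _ (· ≥ k)
    _ ≤ _ := sup_le_sup_left (iSup₂_le fun p hp => inf_le_right.trans (hW (by omega))) _

theorem le_sup_pred_of_eq_biSup {Vp : ℤ → α} (hWV : ∀ k, W k = ⨆ p ≤ k, Vp p) (p : ℤ) :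
    W p ≤ Vp p ⊔ W (p - 1) := by
  rw [hWV, hWV]
  refine iSup₂_le fun q hq => ?_
  rcases hq.eq_or_lt with rfl | hlt
  · exact le_sup_left
  · exact le_sup_of_le_right (le_iSup₂_of_le q (by omega) le_rfl)

theorem le_sup_succ_of_eq_biSup {Vp : ℤ → α} (hFV : ∀ k, F k = ⨆ p ≥ k, Vp p) (p : ℤ) :
    F p ≤ Vp p ⊔ F (p + 1) := by
  rw [hFV, hFV]
  refine iSup₂_le fun q hq => ?_
  rcases hq.eq_or_lt with rfl | hlt
  · exact le_sup_left
  · exact le_sup_of_le_right (le_iSup₂_of_le q (by omega) le_rfl)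

theorem disjoint_of_splitting [IsModularLattice α] [IsCompactlyGenerated α] {Vp : ℤ → α}
    (hV : iSupIndep Vp) (hWV : ∀ k, W k = ⨆ p ≤ k, Vp p) (hFV : ∀ k, F k = ⨆ p ≥ k, Vp p)
    (p : ℤ) : Disjoint (F p) (W (p - 1)) := by
  rw [hFV, hWV]
  exact hV.disjoint_biSup_biSup (s := Set.Ici p) (t := Set.Iic (p - 1))
    (Set.disjoint_left.2 fun q h₁ h₂ => by simp only [Set.mem_Ici, Set.mem_Iic] at h₁ h₂; omega)

theorem eq_inf_of_splitting [IsModularLattice α] [IsCompactlyGenerated α] {Vp : ℤ → α}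
    (hV : iSupIndep Vp) (hWV : ∀ k, W k = ⨆ p ≤ k, Vp p) (hFV : ∀ k, F k = ⨆ p ≥ k, Vp p)
    (p : ℤ) : Vp p = F p ⊓ W p := by
  have hVF : Vp p ≤ F p := hFV p ▸ le_iSup₂_of_le p le_rfl le_rfl
  have hVW : Vp p ≤ W p := hWV p ▸ le_iSup₂_of_le p le_rfl le_rfl
  exact (eq_of_le_sup_of_disjoint (le_inf hVF hVW)
    (inf_le_right.trans (le_sup_pred_of_eq_biSup hWV p))
    ((disjoint_of_splitting hV hWV hFV p).mono_left inf_le_left)).symm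

end Lattice

theorem Submodule.bijective_mkQ_comp_inclusion_iff {R M : Type*} [Ring R] [AddCommGroup M]
    [Module R M] {A B C : Submodule R M} (h : A ≤ B) :
    Function.Bijective ((C.comap B.subtype).mkQ ∘ₗ inclusion h) ↔ Disjoint A C ∧ B ≤ A ⊔ C := by
  refine and_congr ?_ ⟨fun hs x hx => ?_, fun hle z => ?_⟩
  · rw [← LinearMap.ker_eq_bot, LinearMap.ker_comp, ker_mkQ, ← comap_comp,
      subtype_comp_inclusion, disjoint_iff_comap_eq_bot]
  · obtain ⟨a, ha⟩ := hs (mkQ _ ⟨x, hx⟩)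
    have hax : inclusion h a - ⟨x, hx⟩ ∈ C.comap B.subtype := (Quotient.eq _).1 ha
    exact mem_sup.2 ⟨a, a.2, x - a, by simpa using neg_mem hax, by abel⟩
  · obtain ⟨⟨x, hx⟩, rfl⟩ := Quotient.mk_surjective _ z
    obtain ⟨a, ha, c, hc, rfl⟩ := mem_sup.1 (hle hx)
    exact ⟨⟨a, ha⟩, (Quotient.eq _).2 (by simpa using neg_mem hc)⟩

section Conditions

variable {V : Type*} [AddCommGroup V] [Module ℂ V] {W F : ℤ → Submodule ℂ V}

theorem cond1_iff (hW : Monotone W) :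
    Cond1 W F ↔ (∀ p, Disjoint (F p) (W (p - 1))) ∧ ∀ p, W p ≤ F p ⊓ W p ⊔ W (p - 1) := by
  simp only [Cond1, bijective_mkQ_comp_inclusion_iff, forall_and]
  exact and_congr_left' (forall_congr' fun p => disjoint_inf_left_iff_of_le (hW (by omega)))

theorem cond2_iff (hF : Antitone F) :
    Cond2 W F ↔ (∀ p, Disjoint (F p) (W (p - 1))) ∧ ∀ p, F p ≤ F p ⊓ W p ⊔ F (p + 1) := by
  simp only [Cond2, bijective_mkQ_comp_inclusion_iff, forall_and]
  refine and_congr_left' ⟨fun h p => ?_, fun h p => ?_⟩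
  · have h' := h (p - 1)
    rw [sub_add_cancel, inf_comm, disjoint_inf_left_iff_of_le (hF (by omega))] at h'
    exact h'.symm
  · rw [inf_comm, disjoint_inf_left_iff_of_le (hF (by omega))]
    simpa using (h (p + 1)).symm

theorem cond3_of_cond1 (hW : Monotone W) (hF : Antitone F) (hWbot : ∃ a, ∀ n ≤ a, W n = ⊥)
    (hWtop : ∃ b, ∀ n, b ≤ n → W n = ⊤) (h : Cond1 W F) : Cond3 W F := by
  obtain ⟨hdisj, hcov⟩ := (cond1_iff hW).1 h
  obtain ⟨a, ha⟩ := hWbot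
  obtain ⟨b, hb⟩ := hWtop
  exact ⟨iSupIndep_inf_of_disjoint hW hF hdisj, iSup_eq_top_of_le_sup_pred (le_max_left a b)
    (ha a le_rfl) (hb _ (le_max_right a b)) hcov⟩

theorem cond3_of_cond2 (hW : Monotone W) (hF : Antitone F) (hFtop : ∃ a, ∀ n ≤ a, F n = ⊤)
    (hFbot : ∃ b, ∀ n, b ≤ n → F n = ⊥) (h : Cond2 W F) : Cond3 W F := by
  obtain ⟨hdisj, hcov⟩ := (cond2_iff hF).1 h
  obtain ⟨a, ha⟩ := hFtop
  obtain ⟨b, hb⟩ := hFbot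
  exact ⟨iSupIndep_inf_of_disjoint hW hF hdisj, iSup_eq_top_of_le_sup_succ (le_max_left a b)
    (ha a le_rfl) (hb _ (le_max_right a b)) hcov⟩

theorem cond4_of_cond3 (hW : Monotone W) (hF : Antitone F) (h : Cond3 W F) : Cond4 W F := by
  obtain ⟨hind, htop⟩ := h
  have hdisj := disjoint_of_iSupIndep_inf hW hF hind
  exact ⟨_, hind, htop,
    fun k => eq_biSup_inf_of_disjoint_succ hW hF htop (by simpa using (hdisj (k + 1)).symm),
    fun k => eq_biSup_inf_of_disjoint_pred hW hF htop (hdisj k)⟩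

theorem cond1_of_cond4 (hW : Monotone W) (h : Cond4 W F) : Cond1 W F := by
  obtain ⟨Vp, hV, -, hWV, hFV⟩ := h
  refine (cond1_iff hW).2 ⟨disjoint_of_splitting hV hWV hFV, fun p => ?_⟩
  rw [← eq_inf_of_splitting hV hWV hFV p]
  exact le_sup_pred_of_eq_biSup hWV p

theorem cond2_of_cond4 (hF : Antitone F) (h : Cond4 W F) : Cond2 W F := by
  obtain ⟨Vp, hV, -, hWV, hFV⟩ := h
  refine (cond2_iff hF).2 ⟨disjoint_of_splitting hV hWV hFV, fun p => ?_⟩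
  rw [← eq_inf_of_splitting hV hWV hFV p]
  exact le_sup_succ_of_eq_biSup hFV p

end Conditions

theorem hodge_tate_splitting_tfae_general (V : Type*) [AddCommGroup V] [Module ℂ V]
    (W : ℤ → Submodule ℂ V) (hWmono : Monotone W)
    (hWbot : ∃ a : ℤ, ∀ n ≤ a, W n = ⊥) (hWtop : ∃ b : ℤ, ∀ n, b ≤ n → W n = ⊤)
    (F : ℤ → Submodule ℂ V) (hFanti : Antitone F)
    (hFtop : ∃ a : ℤ, ∀ n ≤ a, F n = ⊤) (hFbot : ∃ b : ℤ, ∀ n, b ≤ n → F n = ⊥) :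
    (Cond1 W F ↔ Cond2 W F) ∧ (Cond1 W F ↔ Cond3 W F) ∧ (Cond1 W F ↔ Cond4 W F) ∧
      (∀ Vp : ℤ → Submodule ℂ V,
        iSupIndep Vp → (⨆ p : ℤ, Vp p) = ⊤ →
        (∀ k : ℤ, W k = ⨆ p ≤ k, Vp p) → (∀ k : ℤ, F k = ⨆ p ≥ k, Vp p) →
        ∀ p : ℤ, Vp p = F p ⊓ W p) := by
  have h13 := cond3_of_cond1 hWmono hFanti hWbot hWtop
  have h23 := cond3_of_cond2 hWmono hFanti hFtop hFbot
  have h34 := cond4_of_cond3 hWmono hFanti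
  have h41 := cond1_of_cond4 (F := F) hWmono
  have h42 := cond2_of_cond4 (W := W) hFanti
  exact ⟨⟨h42 ∘ h34 ∘ h13, h41 ∘ h34 ∘ h23⟩, ⟨h13, h41 ∘ h34⟩, ⟨h34 ∘ h13, h41⟩,
    fun _ hV _ hWV hFV => eq_inf_of_splitting hV hWV hFV⟩

theorem hodge_tate_splitting_tfae (V : Type*) [AddCommGroup V] [Module ℂ V]
    [FiniteDimensional ℂ V]
    (W : ℤ → Submodule ℂ V) (hWmono : Monotone W)
    (hWbot : ∃ a : ℤ, ∀ n ≤ a, W n = ⊥) (hWtop : ∃ b : ℤ, ∀ n, b ≤ n → W n = ⊤)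
    (F : ℤ → Submodule ℂ V) (hFanti : Antitone F)
    (hFtop : ∃ a : ℤ, ∀ n ≤ a, F n = ⊤) (hFbot : ∃ b : ℤ, ∀ n, b ≤ n → F n = ⊥) :
    (Cond1 W F ↔ Cond2 W F) ∧ (Cond1 W F ↔ Cond3 W F) ∧ (Cond1 W F ↔ Cond4 W F) ∧
      (∀ Vp : ℤ → Submodule ℂ V,
        iSupIndep Vp → (⨆ p : ℤ, Vp p) = ⊤ →
        (∀ k : ℤ, W k = ⨆ p ≤ k, Vp p) → (∀ k : ℤ, F k = ⨆ p ≥ k, Vp p) →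
        ∀ p : ℤ, Vp p = F p ⊓ W p) :=
  hodge_tate_splitting_tfae_general V W hWmono hWbot hWtop F hFanti hFtop hFbot
end

section
/- Let r be a natural number, let M ∈ Matrix (Fin r) (Fin r) ℂ be invertible, and let Q ∈ Matrix (Fin r) (Fin r) ℚ be invertible. Then (Q_ℂ * M)⁻¹ ⊛ (Q_ℂ * M) = M⁻¹ ⊛ M as matrices in Matrix (Fin r) (Fin r) (ℂ ⊗[ℚ] ℂ), where Q_ℂ denotes Q with entries mapped into ℂ. (This expresses that the big period of a framed Hodge–Tate structure is independent of the choice of rational splitting of the weight filtration.) -/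
open scoped TensorProduct

/-- The ℚ-tensor matrix product `A ⊛ B`, defined entrywise by
`(A ⊛ B) i j = ∑ k, (A i k) ⊗ₜ[ℚ] (B k j)`. -/
noncomputable def tensorMatMul {r : ℕ} (A B : Matrix (Fin r) (Fin r) ℂ) :
    Matrix (Fin r) (Fin r) (ℂ ⊗[ℚ] ℂ) :=
  Matrix.of fun i j => ∑ k, A i k ⊗ₜ[ℚ] B k j

lemma tensorMatMul_move {r : ℕ} (A B : Matrix (Fin r) (Fin r) ℂ)
    (P : Matrix (Fin r) (Fin r) ℚ) :
    tensorMatMul (A * P.map (algebraMap ℚ ℂ)) B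
      = tensorMatMul A (P.map (algebraMap ℚ ℂ) * B) := by
  funext i j
  simp only [tensorMatMul, Matrix.of_apply, Matrix.mul_apply, Matrix.map_apply]
  simp only [TensorProduct.sum_tmul, TensorProduct.tmul_sum]
  rw [Finset.sum_comm]
  refine Finset.sum_congr rfl fun l _ => Finset.sum_congr rfl fun k _ => ?_
  have h1 : A i l * algebraMap ℚ ℂ (P l k) = (P l k) • A i l := by
    rw [Algebra.smul_def, mul_comm]
  have h2 : algebraMap ℚ ℂ (P l k) * B k j = (P l k) • B k j := by
    rw [Algebra.smul_def]
  rw [h1, h2, TensorProduct.smul_tmul]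

/-- The big period of a framed Hodge–Tate structure is independent of the choice of
rational splitting of the weight filtration. -/
theorem big_period_independent_of_splitting (r : ℕ)
    (M : Matrix (Fin r) (Fin r) ℂ) (Q : Matrix (Fin r) (Fin r) ℚ)
    (hM : IsUnit M) (hQ : IsUnit Q) :
    tensorMatMul (Q.map (algebraMap ℚ ℂ) * M)⁻¹ (Q.map (algebraMap ℚ ℂ) * M) =
      tensorMatMul M⁻¹ M := by
  have hQdet : IsUnit Q.det := (Matrix.isUnit_iff_isUnit_det Q).mp hQ
  have hinv : (Q.map (algebraMap ℚ ℂ))⁻¹ = (Q⁻¹).map (algebraMap ℚ ℂ) := by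
    apply Matrix.inv_eq_right_inv
    rw [← Matrix.map_mul, Matrix.mul_nonsing_inv Q hQdet, Matrix.map_one]
    · exact map_zero _
    · exact map_one _
  rw [Matrix.mul_inv_rev, hinv, tensorMatMul_move, ← Matrix.mul_assoc,
    ← Matrix.map_mul, Matrix.nonsing_inv_mul Q hQdet, Matrix.map_one
      (algebraMap ℚ ℂ) (map_zero _) (map_one _), Matrix.one_mul]
end

section
/- For every z ∈ ℂ with z ∉ (−∞,0] ∪ [1,∞), the integral of log(1−t)/t + log t/(1−t) along the segment from 0 to z satisfies ∫_{u=0}^{1} (Complex.log (1 − u*z)/u + z * Complex.log (u*z)/(1 − u*z)) du = −2 * Li₂(z) − Complex.log z * Complex.log (1−z). Equivalently, the Rogers dilogarithm ℛ(z) := −(1/2) ∫₀^z (log(1−t)/t + log t/(1−t)) dt equals Li₂(z) + (1/2) * Complex.log z * Complex.log (1−z). -/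
/-!
`F(u) = log(uz) · log(1 - uz)` has derivative `log(1 - uz)/u - z log(uz)/(1 - uz)` on `(0, 1)`,
tends to `0` as `u → 0⁺` and equals `log z · log(1 - z)` at `u = 1`. Hence the difference of the
two halves of the integrand integrates to `log z · log(1 - z)`, while the first half integrates to
`-Li₂(z)`. For `z` off the two rays both `uz` (for `u > 0`) and `1 - uz` (for `0 ≤ u ≤ 1`) stay
in the slit plane, where `log` is holomorphic; the two halves are integrable because
`log(1 - uz)/u` is a difference quotient at `0` of a differentiable function and
`log(uz) = log u + log z`.
-/

open Set Filter Topology MeasureTheory Complex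

noncomputable section

/-- The dilogarithm `Li₂(z)`, defined for `z ∉ (−∞,0] ∪ [1,∞)` as the integral of
`−log(1−t)/t` along the segment from `0` to `z`. -/
def Li2 (z : ℂ) : ℂ := -∫ u in (0:ℝ)..1, Complex.log (1 - (u : ℂ) * z) / (u : ℂ)

section
variable {z : ℂ} {u : ℝ}

lemma mem_slitPlane_and_one_sub_mem_slitPlane (hz : z ∉ ofReal '' (Iic 0 ∪ Ici 1)) :
    z ∈ slitPlane ∧ 1 - z ∈ slitPlane := by
  simp only [mem_slitPlane_iff_not_le_zero, Complex.le_def, sub_re, sub_im, one_re, one_im,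
    zero_re, zero_im]
  refine ⟨fun ⟨hre, him⟩ => hz ⟨z.re, Or.inl hre, Complex.ext rfl him.symm⟩,
    fun ⟨hre, him⟩ => hz ⟨z.re, Or.inr (by simp only [mem_Ici]; linarith),
      Complex.ext rfl (by simp only [ofReal_im]; linarith)⟩⟩

lemma ofReal_mul_mem_slitPlane (hz : z ∈ slitPlane) (hu : 0 < u) :
    (u : ℂ) * z ∈ slitPlane := by
  rw [mem_slitPlane_iff] at hz ⊢
  simpa [mul_pos_iff_of_pos_left hu, hu.ne'] using hz

lemma one_sub_ofReal_mul_mem_slitPlane (hz : 1 - z ∈ slitPlane) (hu : u ∈ Icc (0 : ℝ) 1) :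
    1 - (u : ℂ) * z ∈ slitPlane := by
  have := starConvex_one_slitPlane hz (sub_nonneg.2 hu.2) hu.1 (sub_add_cancel 1 u)
  convert this using 1
  simp only [real_smul, ofReal_sub, ofReal_one]
  ring

lemma hasDerivAt_log_ofReal_mul (h : (u : ℂ) * z ∈ slitPlane) :
    HasDerivAt (fun u : ℝ => log (u * z)) (z / (u * z)) u := by
  simpa using ((hasDerivAt_id u).ofReal_comp.mul_const z).clog_real h

lemma hasDerivAt_log_one_sub_ofReal_mul (h : 1 - (u : ℂ) * z ∈ slitPlane) :
    HasDerivAt (fun u : ℝ => log (1 - u * z)) (-z / (1 - u * z)) u := by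
  simpa using (((hasDerivAt_id u).ofReal_comp.mul_const z).const_sub 1).clog_real h

lemma slope_log_one_sub_ofReal_mul :
    slope (fun u : ℝ => log (1 - u * z)) 0 = fun u : ℝ => log (1 - u * z) / u := by
  ext u
  simp [slope_def_module, real_smul, div_eq_inv_mul]

variable (z) in
lemma tendsto_log_one_sub_ofReal_mul_div :
    Tendsto (fun u : ℝ => log (1 - u * z) / u) (𝓝[≠] 0) (𝓝 (-z)) := by
  have := hasDerivAt_iff_tendsto_slope.1
    (hasDerivAt_log_one_sub_ofReal_mul (u := 0) (z := z) (by simp))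
  simpa [slope_log_one_sub_ofReal_mul] using this

lemma intervalIntegrable_log_one_sub_ofReal_mul_div (hz : 1 - z ∈ slitPlane) :
    IntervalIntegrable (fun u : ℝ => log (1 - u * z) / u) volume 0 1 := by
  have hdiff : ∀ v ∈ Icc (0 : ℝ) 1, DifferentiableAt ℝ (fun u : ℝ => log (1 - u * z)) v :=
    fun v hv => (hasDerivAt_log_one_sub_ofReal_mul
      (one_sub_ofReal_mul_mem_slitPlane hz hv)).differentiableAt
  have hcont : ContinuousOn (dslope (fun u : ℝ => log (1 - u * z)) 0) (uIcc 0 1) := by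
    rw [uIcc_of_le zero_le_one]
    intro u hu
    refine ContinuousAt.continuousWithinAt ?_
    rcases eq_or_ne u 0 with rfl | hu0
    · exact continuousAt_dslope_same.2 (hdiff 0 hu)
    · exact (continuousAt_dslope_of_ne hu0).2 (hdiff u hu).continuousAt
  refine hcont.intervalIntegrable.congr_uIoo fun u hu => ?_
  rw [uIoo_of_le zero_le_one] at hu
  rw [dslope_of_ne _ hu.1.ne', slope_log_one_sub_ofReal_mul]

lemma tendsto_ofReal_mul_log_ofReal_mul (hz : z ≠ 0) :
    Tendsto (fun u : ℝ => u * log (u * z)) (𝓝[>] 0) (𝓝 0) := by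
  have hcont : Continuous fun u : ℝ => ((u * Real.log u : ℝ) : ℂ) + u * log z :=
    (continuous_ofReal.comp Real.continuous_mul_log).add (by fun_prop)
  have := hcont.tendsto 0
  simp only [ofReal_zero, zero_mul, Real.log_zero, mul_zero, add_zero] at this
  refine (this.mono_left nhdsWithin_le_nhds).congr' ?_
  filter_upwards [self_mem_nhdsWithin] with u (hu : 0 < u)
  rw [log_ofReal_mul hu hz]
  push_cast
  ring

lemma intervalIntegrable_log_ofReal_mul (hz : z ≠ 0) :
    IntervalIntegrable (fun u : ℝ => log (u * z)) volume 0 1 := by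
  have hlog : IntervalIntegrable (fun u : ℝ => (Real.log u : ℂ)) volume 0 1 :=
    ⟨intervalIntegral.intervalIntegrable_log'.1.ofReal,
      intervalIntegral.intervalIntegrable_log'.2.ofReal⟩
  refine (hlog.add (intervalIntegrable_const (c := log z))).congr_uIoo fun u hu => ?_
  rw [uIoo_of_le zero_le_one] at hu
  rw [log_ofReal_mul hu.1 hz]

lemma intervalIntegrable_mul_log_ofReal_mul_div (h0 : z ∈ slitPlane) (h1 : 1 - z ∈ slitPlane) :
    IntervalIntegrable (fun u : ℝ => z * log (u * z) / (1 - u * z)) volume 0 1 := by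
  have hcont : ContinuousOn (fun u : ℝ => z / (1 - u * z)) (uIcc 0 1) := by
    rw [uIcc_of_le zero_le_one]
    exact continuousOn_const.div (by fun_prop)
      fun u hu => slitPlane_ne_zero (one_sub_ofReal_mul_mem_slitPlane h1 hu)
  convert (intervalIntegrable_log_ofReal_mul (slitPlane_ne_zero h0)).mul_continuousOn hcont
    using 2
  ring

lemma hasDerivAt_log_ofReal_mul_mul_log_one_sub (h0 : z ∈ slitPlane) (h1 : 1 - z ∈ slitPlane)
    (hu : u ∈ Ioo (0 : ℝ) 1) :
    HasDerivAt (fun u : ℝ => log (u * z) * log (1 - u * z))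
      (log (1 - u * z) / u - z * log (u * z) / (1 - u * z)) u := by
  have hmem := one_sub_ofReal_mul_mem_slitPlane h1 (Ioo_subset_Icc_self hu)
  have hu0 : (u : ℂ) ≠ 0 := ofReal_ne_zero.2 hu.1.ne'
  refine ((hasDerivAt_log_ofReal_mul (ofReal_mul_mem_slitPlane h0 hu.1)).fun_mul
    (hasDerivAt_log_one_sub_ofReal_mul hmem)).congr_deriv ?_
  field_simp [slitPlane_ne_zero h0, slitPlane_ne_zero hmem]
  ring

lemma integral_log_one_sub_ofReal_mul_div_sub (h0 : z ∈ slitPlane) (h1 : 1 - z ∈ slitPlane) :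
    ∫ u in (0 : ℝ)..1, (log (1 - u * z) / u - z * log (u * z) / (1 - u * z)) =
      log z * log (1 - z) := by
  have hlim₀ : Tendsto (fun u : ℝ => log (u * z) * log (1 - u * z)) (𝓝[>] 0) (𝓝 0) := by
    have := (tendsto_ofReal_mul_log_ofReal_mul (slitPlane_ne_zero h0)).mul
      ((tendsto_log_one_sub_ofReal_mul_div z).mono_left
        (nhdsWithin_mono 0 fun _ hu => ne_of_gt hu))
    rw [zero_mul] at this
    refine this.congr' ?_
    filter_upwards [self_mem_nhdsWithin] with u (hu : 0 < u)
    field_simp [ofReal_ne_zero.2 hu.ne']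
  have hlim₁ : Tendsto (fun u : ℝ => log (u * z) * log (1 - u * z)) (𝓝[<] 1)
      (𝓝 (log z * log (1 - z))) := by
    have : ContinuousAt (fun u : ℝ => log (u * z) * log (1 - u * z)) 1 :=
      (hasDerivAt_log_ofReal_mul (by simpa using h0)).continuousAt.mul
        (hasDerivAt_log_one_sub_ofReal_mul (by simpa using h1)).continuousAt
    simpa using this.tendsto.mono_left nhdsWithin_le_nhds
  rw [intervalIntegral.integral_eq_sub_of_hasDerivAt_of_tendsto zero_lt_one
    (fun u hu => hasDerivAt_log_ofReal_mul_mul_log_one_sub h0 h1 hu)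
    ((intervalIntegrable_log_one_sub_ofReal_mul_div h1).sub
      (intervalIntegrable_mul_log_ofReal_mul_div h0 h1)) hlim₀ hlim₁, sub_zero]

end

/-- The integral of `log(1−t)/t + log t/(1−t)` along the segment from `0` to `z`
equals `−2·Li₂(z) − log z · log(1−z)`; equivalently, the Rogers dilogarithm
`ℛ(z) = −(1/2)∫₀ᶻ (log(1−t)/t + log t/(1−t)) dt` equals
`Li₂(z) + (1/2)·log z·log(1−z)`. -/
theorem rogers_dilogarithm_formula (z : ℂ)
    (hz : z ∉ Complex.ofReal '' (Set.Iic 0 ∪ Set.Ici 1)) :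
    (∫ u in (0:ℝ)..1,
        (Complex.log (1 - (u : ℂ) * z) / (u : ℂ) +
          z * Complex.log ((u : ℂ) * z) / (1 - (u : ℂ) * z))) =
      -2 * Li2 z - Complex.log z * Complex.log (1 - z) ∧
    -(1 / 2 : ℂ) * (∫ u in (0:ℝ)..1,
        (Complex.log (1 - (u : ℂ) * z) / (u : ℂ) +
          z * Complex.log ((u : ℂ) * z) / (1 - (u : ℂ) * z))) =
      Li2 z + (1 / 2 : ℂ) * Complex.log z * Complex.log (1 - z) := by
  obtain ⟨h0, h1⟩ := mem_slitPlane_and_one_sub_mem_slitPlane hz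
  have hI₁ := intervalIntegrable_log_one_sub_ofReal_mul_div h1
  have hI₂ := intervalIntegrable_mul_log_ofReal_mul_div h0 h1
  have hdiff := integral_log_one_sub_ofReal_mul_div_sub h0 h1
  rw [intervalIntegral.integral_sub hI₁ hI₂] at hdiff
  rw [intervalIntegral.integral_add hI₁ hI₂, Li2]
  exact ⟨by linear_combination -hdiff, by linear_combination hdiff / 2⟩

end
end

section
/- Let ι be a finite type, S ⊆ ι a subset, and A, B ∈ Matrix ι ι ℂ matrices such that A i j = 0 whenever i ∉ S or j ∉ S, B i j = 0 whenever i ∈ S or j ∈ S, and A + B is nilpotent. Then A and B are nilpotent, the matrices 1 + A + B and 1 + A are invertible, and for all i, j ∈ S one has Σ_{k : ι} ((1 + A + B)⁻¹ i k) ⊗ₜ[ℚ] ((1 + A + B) k j) = Σ_{k : ι} ((1 + A)⁻¹ i k) ⊗ₜ[ℚ] ((1 + A) k j) in ℂ ⊗[ℚ] ℂ. (This is the matrix core of the theorem that the big period factors through the equivalence relation on framed Hodge–Tate structures.) -/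
open scoped TensorProduct

/-- Matrix core of the theorem that the big period factors through the equivalence
relation on framed Hodge–Tate structures. -/
theorem big_period_of_complementary_support {ι : Type*} [Fintype ι] [DecidableEq ι]
    (S : Set ι) (A B : Matrix ι ι ℂ)
    (hA : ∀ i j, (i ∉ S ∨ j ∉ S) → A i j = 0)
    (hB : ∀ i j, (i ∈ S ∨ j ∈ S) → B i j = 0)
    (hnil : IsNilpotent (A + B)) :
    IsNilpotent A ∧ IsNilpotent B ∧ IsUnit (1 + A + B) ∧ IsUnit (1 + A) ∧
      ∀ i ∈ S, ∀ j ∈ S,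
        ∑ k, ((1 + A + B)⁻¹ i k) ⊗ₜ[ℚ] ((1 + A + B) k j) =
          ∑ k, ((1 + A)⁻¹ i k) ⊗ₜ[ℚ] ((1 + A) k j) := by
  have hAB : A * B = 0 := by
    ext i j
    simp only [Matrix.mul_apply, Matrix.zero_apply]
    refine Finset.sum_eq_zero fun k _ => ?_
    by_cases hk : k ∈ S
    · rw [hB k j (Or.inl hk), mul_zero]
    · rw [hA i k (Or.inr hk), zero_mul]
  have hBA : B * A = 0 := by
    ext i j
    simp only [Matrix.mul_apply, Matrix.zero_apply]
    refine Finset.sum_eq_zero fun k _ => ?_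
    by_cases hk : k ∈ S
    · rw [hB i k (Or.inr hk), zero_mul]
    · rw [hA k j (Or.inl hk), mul_zero]
  obtain ⟨n, hn⟩ := hnil
  have hApow : ∀ m, A * (A + B) ^ m = A ^ (m + 1) := by
    intro m
    induction m with
    | zero => simp
    | succ m ih =>
      rw [pow_succ, ← mul_assoc, ih, mul_add]
      have h0 : A ^ (m + 1) * B = 0 := by rw [pow_succ, mul_assoc, hAB, mul_zero]
      rw [h0, add_zero, ← pow_succ]
  have hBpow : ∀ m, (A + B) ^ m * B = B ^ (m + 1) := by
    intro m
    induction m with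
    | zero => simp
    | succ m ih =>
      rw [pow_succ', mul_assoc, add_mul, ih]
      have h0 : A * B ^ (m + 1) = 0 := by rw [pow_succ', ← mul_assoc, hAB, zero_mul]
      rw [h0, zero_add, ← pow_succ']
  have hAnil : IsNilpotent A := ⟨n + 1, by rw [← hApow n, hn, mul_zero]⟩
  have hBnil : IsNilpotent B := ⟨n + 1, by rw [← hBpow n, hn, zero_mul]⟩
  have hUM : IsUnit (1 + A + B) := by
    have : IsNilpotent (A + B) := ⟨n, hn⟩
    simpa [add_assoc] using this.isUnit_one_add
  have hUA : IsUnit (1 + A) := hAnil.isUnit_one_add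
  have hUB : IsUnit ((1 : Matrix ι ι ℂ) + B) := hBnil.isUnit_one_add
  refine ⟨hAnil, hBnil, hUM, hUA, fun i hi j hj => ?_⟩
  -- row lemma for (1+B)⁻¹
  have hBrow : ∀ l, ((1 : Matrix ι ι ℂ) + B)⁻¹ i l = (1 : Matrix ι ι ℂ) i l := by
    have hmul : ((1 : Matrix ι ι ℂ) + B) * ((1 : Matrix ι ι ℂ) + B)⁻¹ = 1 :=
      Matrix.mul_nonsing_inv _ ((Matrix.isUnit_iff_isUnit_det _).mp hUB)
    intro l
    have := congrFun (congrFun hmul i) l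
    rw [Matrix.add_mul, Matrix.one_mul, Matrix.add_apply] at this
    have hz : (B * ((1 : Matrix ι ι ℂ) + B)⁻¹) i l = 0 := by
      simp only [Matrix.mul_apply]
      exact Finset.sum_eq_zero fun k _ => by rw [hB i k (Or.inl hi), zero_mul]
    rw [hz, add_zero] at this
    exact this
  have hfact : (1 : Matrix ι ι ℂ) + A + B = (1 + A) * (1 + B) := by
    rw [mul_add, mul_one, add_mul, one_mul, hAB, add_zero]
  have hinv : ∀ k, (1 + A + B)⁻¹ i k = (1 + A)⁻¹ i k := by
    intro k
    rw [hfact, Matrix.mul_inv_rev, Matrix.mul_apply]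
    rw [Finset.sum_congr rfl fun l _ => by rw [hBrow l]]
    simp [Matrix.one_apply]
  have hent : ∀ k, (1 + A + B) k j = (1 + A) k j := by
    intro k
    simp [Matrix.add_apply, hB k j (Or.inr hj)]
  exact Finset.sum_congr rfl fun k _ => by rw [hinv k, hent k]
end

section
/- Let a₁, b₁, a₁', b₁' ∈ ℤ and c, c' ∈ ℂ, and set T := U(2*π*Complex.I*b₁, 4*π*Complex.I*a₁, c) and T' := U(2*π*Complex.I*b₁', 4*π*Complex.I*a₁', c'). Then T^{b₁'} * T'^{−b₁} * T^{−b₁'} * T'^{b₁} = U(0, 0, (2*π*Complex.I)^2 * 2 * b₁ * b₁' * (a₁*b₁' − a₁'*b₁)) (integer powers taken in the group of invertible 3×3 matrices). -/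
/-- The 3×3 upper unipotent complex matrix `U(a,b,c) = !![1,a,c; 0,1,b; 0,0,1]`. -/
def U (a b c : ℂ) : Matrix (Fin 3) (Fin 3) ℂ := !![1, a, c; 0, 1, b; 0, 0, 1]

lemma U_mul (a b c a' b' c' : ℂ) :
    U a b c * U a' b' c' = U (a + a') (b + b') (c + c' + a * b') := by
  ext i j
  fin_cases i <;> fin_cases j <;>
    simp [U, Matrix.mul_apply, Fin.sum_univ_succ, Matrix.vecHead, Matrix.vecTail] <;> ring

lemma U_one : U 0 0 0 = 1 := by
  simp [U, Matrix.one_fin_three]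

lemma U_pow (a b c : ℂ) (n : ℕ) :
    U a b c ^ n = U (n * a) (n * b) (n * c + (n * (n - 1) / 2) * a * b) := by
  induction n with
  | zero => simp [U_one]
  | succ k ih =>
    rw [pow_succ, ih, U_mul]
    push_cast
    congr 1 <;> ring

lemma U_inv (a b c : ℂ) : (U a b c)⁻¹ = U (-a) (-b) (a * b - c) := by
  apply Matrix.inv_eq_right_inv
  rw [U_mul, ← U_one]
  congr 1 <;> ring

lemma U_zpow (a b c : ℂ) (n : ℤ) :
    U a b c ^ n = U (n * a) (n * b) (n * c + (n * (n - 1) / 2) * a * b) := by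
  obtain ⟨k⟩ | ⟨k⟩ := n
  · rw [Int.ofNat_eq_coe, zpow_natCast, U_pow]; push_cast; congr 1 <;> ring
  · rw [zpow_negSucc, U_pow, U_inv]
    push_cast
    congr 1 <;> ring

/-- The commutator identity producing global monodromy elements of the Chern–Simons
variation of mixed Hodge structure from two ideal points with boundary-slope data
`(a₁, b₁)` and `(a₁', b₁')`. -/
theorem monodromy_commutator (a₁ b₁ a₁' b₁' : ℤ) (c c' : ℂ) :
    letI T := U (2 * (Real.pi : ℂ) * Complex.I * b₁) (4 * (Real.pi : ℂ) * Complex.I * a₁) c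
    letI T' := U (2 * (Real.pi : ℂ) * Complex.I * b₁') (4 * (Real.pi : ℂ) * Complex.I * a₁') c'
    T ^ (b₁' : ℤ) * T' ^ (-b₁ : ℤ) * T ^ (-b₁' : ℤ) * T' ^ (b₁ : ℤ) =
      U 0 0 ((2 * (Real.pi : ℂ) * Complex.I) ^ 2 * 2 * b₁ * b₁' *
        ((a₁ : ℂ) * b₁' - (a₁' : ℂ) * b₁)) := by
  simp only [U_zpow, U_mul]
  push_cast
  congr 1 <;> ring
end
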